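/- Under the assumptions of the ODE w'(t) = (μ/D)·R(w(t))·I(t), w(0)=0, with R(w) = R_on·(w/D) + R_off·(1 − w/D) and R_on ≠ R_off, the total resistance satisfies R(w(t)) = R_off·exp(−μ·(R_off − R_on)·q(t)/D²). -/

import Mathlib

/-! Since `R` is affine, `R ∘ w` solves the linear ODE `(R ∘ w)' = k · I · (R ∘ w)` with
`k = -μ (R_off - R_on) / D²`; as `q' = I`, the product `R (w t) · exp (-k q t)` has derivative zero,
hence stays equal to its value `R_off` at `t = 0`. -/

open Real

theorem eq_mul_exp_sub_of_hasDerivAt {f a A : ℝ → ℝ} (hf : ∀ t, HasDerivAt f (a t * f t) t)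
    (hA : ∀ t, HasDerivAt A (a t) t) (t : ℝ) : f t = f 0 * exp (A t - A 0) := by
  have hderiv : ∀ s, HasDerivAt (fun s => f s * exp (-A s)) 0 s := fun s => by
    have h : HasDerivAt (fun s => f s * exp (-A s))
        (a s * f s * exp (-A s) + f s * (exp (-A s) * -a s)) s := (hf s).mul (hA s).neg.exp
    exact h.congr_deriv (by ring)
  have hconst : f t * exp (-A t) = f 0 * exp (-A 0) :=
    is_const_of_deriv_eq_zero (fun s => (hderiv s).differentiableAt) (fun s => (hderiv s).deriv) t 0
  calc f t = f t * exp (-A t) * exp (A t) := by rw [mul_assoc, ← exp_add]; simp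
    _ = f 0 * exp (A t - A 0) := by rw [hconst, mul_assoc, ← exp_add, sub_eq_neg_add]

theorem stmt_4_general (μ D Ron Roff : ℝ)
    (I w : ℝ → ℝ) (hI : Continuous I)
    (q : ℝ → ℝ) (hq : ∀ t, q t = ∫ s in (0:ℝ)..t, I s)
    (R : ℝ → ℝ) (hR : ∀ x, R x = Ron * (x / D) + Roff * (1 - x / D))
    (hw' : ∀ t, HasDerivAt w (μ / D * R (w t) * I t) t)
    (hw0 : w 0 = 0) :
    ∀ t, R (w t) = Roff * Real.exp (-(μ * (Roff - Ron) * q t / D ^ 2)) := by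
  let k := -(μ * (Roff - Ron) / D ^ 2)
  have hq' : ∀ t, HasDerivAt q (I t) t := fun t => by
    rw [show q = fun u => ∫ s in (0:ℝ)..u, I s from funext hq]
    exact (hI.integral_hasStrictDerivAt 0 t).hasDerivAt
  have hR_affine : (fun t => R (w t)) = fun t => (Ron - Roff) / D * w t + Roff := by
    funext t; rw [hR]; ring
  have hRw' : ∀ t, HasDerivAt (fun t => R (w t)) (k * I t * R (w t)) t := fun t => by
    rw [hR_affine]
    exact (((hw' t).const_mul ((Ron - Roff) / D)).add_const Roff).congr_deriv (by ring)
  intro t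
  have hq0 : q 0 = 0 := by simp [hq]
  rw [eq_mul_exp_sub_of_hasDerivAt hRw' (fun t => (hq' t).const_mul k) t, hR, hw0, hq0]
  simp only [k]
  ring_nf

theorem stmt_4 (μ D Ron Roff : ℝ) (hD : 0 < D) (hne : Ron ≠ Roff)
    (I w : ℝ → ℝ) (hI : Continuous I)
    (q : ℝ → ℝ) (hq : ∀ t, q t = ∫ s in (0:ℝ)..t, I s)
    (R : ℝ → ℝ) (hR : ∀ x, R x = Ron * (x / D) + Roff * (1 - x / D))
    (hw' : ∀ t, HasDerivAt w (μ / D * R (w t) * I t) t)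
    (hw0 : w 0 = 0)
    (hRpos : ∀ t, 0 < R (w t)) :
    ∀ t, R (w t) = Roff * Real.exp (-(μ * (Roff - Ron) * q t / D ^ 2)) :=
  stmt_4_general μ D Ron Roff I w hI q hq R hR hw' hw0
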